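/- Let A be a q-positive subset of an SSD space B, and let C be the smallest q-representable superset of A (which equals P_q(Φ_A^@)). Then Φ_C = Φ_A on B. -/

import Mathlib

/-!
Every `c ∈ P_q(Φ_A^@)` satisfies `⌊x,c⌋ - Φ_A(x) ≤ Φ_A^@(c) = q(c)`, i.e. `⌊x,c⌋ - q(c) ≤ Φ_A(x)`,
so `Φ_C ≤ Φ_A`. Conversely `q`-positivity gives `Φ_A = q` on `A`, hence `Φ_A^@ = q` on `A`;
thus `A ⊆ C` and `Φ_A ≤ Φ_C` by monotonicity of `Φ`.
-/

noncomputable section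

variable {B : Type*} [AddCommGroup B] [Module ℝ B]

/-- The quadratic form `q(x) = ½⌊x,x⌋` associated to the bilinear form `br`. -/
def qQ (br : B →ₗ[ℝ] B →ₗ[ℝ] ℝ) (x : B) : ℝ := (1 / 2) * br x x

/-- `A` is `q`-positive: nonempty and `q(b - c) ≥ 0` for all `b, c ∈ A`. -/
def IsQPositive (br : B →ₗ[ℝ] B →ₗ[ℝ] ℝ) (A : Set B) : Prop :=
  A.Nonempty ∧ ∀ b ∈ A, ∀ c ∈ A, 0 ≤ qQ br (b - c)

/-- `A^π`, the set of points `q`-positively related to `A`. -/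
def qPi (br : B →ₗ[ℝ] B →ₗ[ℝ] ℝ) (A : Set B) : Set B :=
  {b : B | ∀ a ∈ A, 0 ≤ qQ br (b - a)}

/-- `A` is maximally `q`-positive. -/
def IsMaxQPositive (br : B →ₗ[ℝ] B →ₗ[ℝ] ℝ) (A : Set B) : Prop :=
  IsQPositive br A ∧ ∀ C : Set B, IsQPositive br C → A ⊆ C → C = A

/-- The generalized Fitzpatrick function `Φ_A(x) = sup_{a ∈ A} (⌊x,a⌋ - q(a))`. -/
def PhiF (br : B →ₗ[ℝ] B →ₗ[ℝ] ℝ) (A : Set B) (x : B) : EReal :=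
  ⨆ a ∈ A, ((br x a - qQ br a : ℝ) : EReal)

/-- The intrinsic conjugate `f^@(b) = sup_{c ∈ B} (⌊c,b⌋ - f(c))`. -/
def intrinsicConj (br : B →ₗ[ℝ] B →ₗ[ℝ] ℝ) (f : B → EReal) (b : B) : EReal :=
  ⨆ c : B, ((br c b : ℝ) : EReal) - f c

/-- `P_q(f) = {b : f(b) = q(b)}`. -/
def PqSet (br : B →ₗ[ℝ] B →ₗ[ℝ] ℝ) (f : B → EReal) : Set B :=
  {b : B | f b = ((qQ br b : ℝ) : EReal)}

/-- `G_f = {b : f(b) + f^@(b) = ⌊b,b⌋}`. -/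
def GSet (br : B →ₗ[ℝ] B →ₗ[ℝ] ℝ) (f : B → EReal) : Set B :=
  {b : B | f b + intrinsicConj br f b = ((br b b : ℝ) : EReal)}

/-- Convexity for `ℝ ∪ {+∞}`-valued functions. -/
def ConvexE (f : B → EReal) : Prop :=
  ∀ x y : B, ∀ α β : ℝ, 0 ≤ α → 0 ≤ β → α + β = 1 →
    f (α • x + β • y) ≤ (α : EReal) * f x + (β : EReal) * f y

/-- The weak topology `w(B,B)` induced by the functionals `⌊·,b⌋`, `b ∈ B`. -/
def weakTop (br : B →ₗ[ℝ] B →ₗ[ℝ] ℝ) : TopologicalSpace B :=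
  ⨅ b : B, TopologicalSpace.induced (fun x => br x b) inferInstance

/-- Lower semicontinuity with respect to the weak topology `w(B,B)`. -/
def LscW (br : B →ₗ[ℝ] B →ₗ[ℝ] ℝ) (f : B → EReal) : Prop :=
  @LowerSemicontinuous B EReal (weakTop br) _ f

/-- `A` is `q`-representable: it has a `w(B,B)`-lsc proper convex `q`-representation. -/
def IsQRepresentable (br : B →ₗ[ℝ] B →ₗ[ℝ] ℝ) (A : Set B) : Prop :=
  ∃ f : B → EReal, LscW br f ∧ ConvexE f ∧ (∃ x, f x ≠ ⊤) ∧
    (∀ x, ((qQ br x : ℝ) : EReal) ≤ f x) ∧ PqSet br f = A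

lemma EReal.coe_sub_le_coe_iff (r s : ℝ) (e : EReal) :
    (r : EReal) - e ≤ s ↔ ((r - s : ℝ) : EReal) ≤ e := by
  rw [EReal.sub_le_iff_le_add (by simp) (by simp), EReal.coe_sub,
    EReal.sub_le_iff_le_add (by simp) (by simp), add_comm]

section Fitzpatrick

variable (br : B →ₗ[ℝ] B →ₗ[ℝ] ℝ)

lemma qQ_sub (hsym : ∀ x y : B, br x y = br y x) (b c : B) :
    qQ br (b - c) = qQ br b + qQ br c - br b c := by
  simp only [qQ, map_sub, LinearMap.sub_apply, hsym c b]
  ring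

lemma le_PhiF {A : Set B} {a : B} (ha : a ∈ A) (x : B) :
    ((br x a - qQ br a : ℝ) : EReal) ≤ PhiF br A x :=
  le_iSup₂_of_le a ha le_rfl

lemma PhiF_mono {A C : Set B} (hAC : A ⊆ C) (x : B) : PhiF br A x ≤ PhiF br C x :=
  iSup₂_le fun _ ha => le_PhiF br (hAC ha) x

lemma coe_sub_le_of_intrinsicConj_le {f : B → EReal} {c : B}
    (hc : intrinsicConj br f c ≤ qQ br c) (x : B) : ((br x c - qQ br c : ℝ) : EReal) ≤ f x :=
  (EReal.coe_sub_le_coe_iff _ _ _).1 ((le_iSup_of_le x le_rfl).trans hc)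

lemma PhiF_PqSet_intrinsicConj_le (f : B → EReal) (x : B) :
    PhiF br (PqSet br (intrinsicConj br f)) x ≤ f x :=
  iSup₂_le fun _ hc => coe_sub_le_of_intrinsicConj_le br hc.le x

lemma intrinsicConj_PhiF_le {A : Set B} {a : B} (ha : a ∈ A) :
    intrinsicConj br (PhiF br A) a ≤ qQ br a :=
  iSup_le fun c => (EReal.coe_sub_le_coe_iff _ _ _).2 (le_PhiF br ha c)

variable (hsym : ∀ x y : B, br x y = br y x) {A : Set B}
  (hA : ∀ b ∈ A, ∀ c ∈ A, 0 ≤ qQ br (b - c))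
include hsym hA

lemma PhiF_eq_qQ_of_mem {a : B} (ha : a ∈ A) : PhiF br A a = qQ br a := by
  refine le_antisymm (iSup₂_le fun a' ha' => ?_) ?_
  · have := hA a ha a' ha'
    rw [qQ_sub br hsym] at this
    exact_mod_cast (by linarith : br a a' - qQ br a' ≤ qQ br a)
  · refine le_trans (le_of_eq ?_) (le_PhiF br ha a)
    norm_cast
    simp only [qQ]
    ring

lemma intrinsicConj_PhiF_eq_qQ_of_mem {a : B} (ha : a ∈ A) :
    intrinsicConj br (PhiF br A) a = qQ br a := by
  refine le_antisymm (intrinsicConj_PhiF_le br ha) (le_iSup_of_le a (le_of_eq ?_))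
  rw [PhiF_eq_qQ_of_mem br hsym hA ha, ← EReal.coe_sub]
  norm_cast
  simp only [qQ]
  ring

lemma subset_PqSet_intrinsicConj_PhiF : A ⊆ PqSet br (intrinsicConj br (PhiF br A)) :=
  fun _ ha => intrinsicConj_PhiF_eq_qQ_of_mem br hsym hA ha

end Fitzpatrick

theorem stmt4_general (br : B →ₗ[ℝ] B →ₗ[ℝ] ℝ)
    (hsym : ∀ x y : B, br x y = br y x)
    (A C : Set B) (hA : IsQPositive br A)
    (hC : C = PqSet br (intrinsicConj br (PhiF br A))) :
    ∀ x : B, PhiF br C x = PhiF br A x := by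
  subst hC
  exact fun x => le_antisymm (PhiF_PqSet_intrinsicConj_le br _ x)
    (PhiF_mono br (subset_PqSet_intrinsicConj_PhiF br hsym hA.2) x)

/-- If C is the smallest q-representable superset of A
(which equals P_q(Φ_A^@)), then Φ_C = Φ_A. -/
theorem stmt4 [Nontrivial B] (br : B →ₗ[ℝ] B →ₗ[ℝ] ℝ)
    (hsym : ∀ x y : B, br x y = br y x)
    (A C : Set B) (hA : IsQPositive br A)
    (hC : C = PqSet br (intrinsicConj br (PhiF br A))) :
    ∀ x : B, PhiF br C x = PhiF br A x :=
  stmt4_general br hsym A C hA hC
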